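/- arXiv:1509.04190 — 2 statements merged into one kernel-verified Lean document; each statement's English description precedes it below -/
import Mathlib

section
/- Let z be a complex number with z ≠ 1. For every integer n ≥ 1, the Apostol–Bernoulli number satisfies B_n(z) = (-1)^{n−1} n Σ_{k=1}^{n} ((k−1)!/(z−1)^k) S(n,k), where S denotes Stirling numbers of the second kind. -/
/-!
Put `w = z - 1` and `u = exp (-x) - 1`. Then `z exp x - 1 = exp x (w - u)`, so
`1 / (z exp x - 1) = ∑ₖ exp (-x) uᵏ / wᵏ⁺¹` for small `x`. Multiplying
`(exp y - 1)ᵏ = ∑ₘ k! S(m, k) yᵐ / m!` by `exp y` and using `S(m + 1, k + 1) = ∑ᵢ C(m, i) S(i, k)`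
gives `exp y (exp y - 1)ᵏ = ∑ₘ k! S(m + 1, k + 1) yᵐ / m!`, which with `y = -x` expands each
term. The resulting double series converges absolutely, and summing it over `k` first (a finite
sum, since `S(m + 1, k + 1) = 0` for `k > m`) gives the Taylor coefficients of
`x / (z exp x - 1)`, which are `Bₙ(z) / n!` by uniqueness of power series coefficients.
-/

/-- Stirling numbers of the second kind, via the standard recurrence. -/
def stirling : ℕ → ℕ → ℕ
  | 0, 0 => 1
  | 0, _ + 1 => 0
  | _ + 1, 0 => 0
  | n + 1, k + 1 => (k + 1) * stirling n (k + 1) + stirling n k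

open Finset Nat Filter Topology NormedSpace

theorem stirling_eq_stirlingSecond : stirling = stirlingSecond := by
  funext n k
  induction n generalizing k with
  | zero => cases k <;> rfl
  | succ n ih =>
    cases k with
    | zero => rfl
    | succ k => rw [stirling, stirlingSecond_succ_succ, ih, ih]

namespace Nat

theorem stirlingSecond_le_pow (m k : ℕ) : stirlingSecond m k ≤ (k + 1) ^ m := by
  induction m generalizing k with
  | zero => cases k <;> simp
  | succ m ih =>
    cases k with
    | zero => simp
    | succ k =>
      calc stirlingSecond (m + 1) (k + 1)
          = (k + 1) * stirlingSecond m (k + 1) + stirlingSecond m k := stirlingSecond_succ_succ m k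
        _ ≤ (k + 1) * (k + 2) ^ m + (k + 2) ^ m := by
          gcongr
          · exact ih (k + 1)
          · exact (ih k).trans (Nat.pow_le_pow_left (by omega) m)
        _ = (k + 1 + 1) ^ (m + 1) := by ring

theorem sum_range_choose_mul_stirlingSecond (n k : ℕ) :
    ∑ i ∈ range (n + 1), n.choose i * stirlingSecond i k = stirlingSecond (n + 1) (k + 1) := by
  induction n generalizing k with
  | zero => cases k <;> rfl
  | succ n ih =>
    have pascal := sum_choose_succ_mul (R := ℕ) (fun i _ => stirlingSecond i k) n
    simp only [Nat.cast_id] at pascal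
    rw [pascal, ih, stirlingSecond_succ_succ (n + 1)]
    cases k with
    | zero => simp
    | succ k =>
      simp only [stirlingSecond_succ_succ _ k, mul_add, sum_add_distrib, mul_left_comm _ (k + 1),
        ← mul_sum, ih]
      ring

end Nat

theorem hasSum_pow_div_pow_succ {K : Type*} [NormedField K] [CompleteSpace K] {a w : K}
    (h : ‖a‖ < ‖w‖) : HasSum (fun k => a ^ k / w ^ (k + 1)) (w - a)⁻¹ := by
  have hw : w ≠ 0 := norm_pos_iff.mp ((norm_nonneg a).trans_lt h)
  have hq : ‖a / w‖ < 1 := by rwa [norm_div, div_lt_one ((norm_nonneg a).trans_lt h)]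
  rw [show (w - a)⁻¹ = (1 - a / w)⁻¹ / w by field_simp]
  refine ((hasSum_geometric_of_norm_lt_one hq).div_const w).congr_fun fun k => ?_
  rw [div_pow, pow_succ, div_div]

theorem eq_of_eventually_hasSum_mul_pow {𝕜 : Type*} [NontriviallyNormedField 𝕜] {f : 𝕜 → 𝕜}
    {a b : ℕ → 𝕜} (ha : ∀ᶠ x in 𝓝 0, HasSum (fun n => a n * x ^ n) (f x))
    (hb : ∀ᶠ x in 𝓝 0, HasSum (fun n => b n * x ^ n) (f x)) : a = b := by
  have hseries (c : ℕ → 𝕜) (hc : ∀ᶠ x in 𝓝 0, HasSum (fun n => c n * x ^ n) (f x)) :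
      HasFPowerSeriesAt f (FormalMultilinearSeries.ofScalars 𝕜 c) 0 :=
    hasFPowerSeriesAt_iff.mpr <| by
      simpa [FormalMultilinearSeries.coeff_ofScalars, mul_comm] using hc
  funext n
  simpa [FormalMultilinearSeries.coeff_ofScalars] using
    congrArg (·.coeff n) ((hseries a ha).eq_formalMultilinearSeries (hseries b hb))

section Series

variable {𝕂 : Type*} [RCLike 𝕂]

theorem norm_stirlingSecond_mul_pow_div_factorial (k m : ℕ) (y : 𝕂) :
    ‖(k ! * stirlingSecond m k : 𝕂) * y ^ m / (m ! : 𝕂)‖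
      = (k ! * stirlingSecond m k : ℝ) * ‖y‖ ^ m / m ! := by
  simp only [norm_div, norm_mul, norm_pow, RCLike.norm_natCast]

theorem summable_norm_stirlingSecond_mul_pow_div_factorial (k : ℕ) (y : 𝕂) :
    Summable fun m => ‖(k ! * stirlingSecond m k : 𝕂) * y ^ m / (m ! : 𝕂)‖ := by
  refine .of_nonneg_of_le (fun _ => norm_nonneg _) (fun m => ?_)
    ((Real.summable_pow_div_factorial ((k + 1) * ‖y‖)).mul_left (k ! : ℝ))
  rw [norm_stirlingSecond_mul_pow_div_factorial]
  simp only [mul_pow, mul_div_assoc, mul_assoc]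
  gcongr
  exact_mod_cast stirlingSecond_le_pow m k

theorem hasSum_exp_mul_of_hasSum_stirlingSecond {k : ℕ} {y : 𝕂}
    (hk : HasSum (fun m => (k ! * stirlingSecond m k : 𝕂) * y ^ m / m !) ((exp y - 1) ^ k)) :
    HasSum (fun m => (k ! * stirlingSecond (m + 1) (k + 1) : 𝕂) * y ^ m / m !)
      (exp y * (exp y - 1) ^ k) := by
  have hprod := hasSum_sum_range_mul_of_summable_norm
    (summable_norm_stirlingSecond_mul_pow_div_factorial k y)
    (NormedSpace.norm_expSeries_div_summable y)
  rw [hk.tsum_eq, (NormedSpace.expSeries_div_hasSum_exp y).tsum_eq, mul_comm] at hprod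
  refine hprod.congr_fun fun m => ?_
  have hterm : ∀ i ∈ range (m + 1), (k ! * stirlingSecond i k : 𝕂) * y ^ i / i !
      * (y ^ (m - i) / (m - i)!) = (k ! * (m.choose i * stirlingSecond i k) : 𝕂) * y ^ m / m ! := by
    intro i hi
    have hi : i ≤ m := Nat.lt_succ_iff.mp (mem_range.mp hi)
    have hfact : (m ! : 𝕂) ≠ 0 := Nat.cast_ne_zero.mpr (factorial_ne_zero m)
    rw [Nat.cast_choose 𝕂 hi, ← pow_mul_pow_sub y hi]
    field_simp
  rw [sum_congr rfl hterm, ← sum_div, ← sum_mul, ← mul_sum]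
  exact_mod_cast congrArg (fun s : ℕ => (k ! * s : 𝕂) * y ^ m / m !)
    (sum_range_choose_mul_stirlingSecond m k).symm

theorem hasSum_stirlingSecond_exp_sub_one_pow (k : ℕ) (y : 𝕂) :
    HasSum (fun m => (k ! * stirlingSecond m k : 𝕂) * y ^ m / m !) ((exp y - 1) ^ k) := by
  induction k with
  | zero =>
    convert hasSum_single (f := fun m => (0 ! * stirlingSecond m 0 : 𝕂) * y ^ m / m !) 0
      fun m hm => ?_ using 1
    · simp
    · obtain ⟨m, rfl⟩ := Nat.exists_eq_succ_of_ne_zero hm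
      simp
  | succ k ih =>
    have h := (hasSum_exp_mul_of_hasSum_stirlingSecond ih).sub ih
    rw [← sub_one_mul, ← pow_succ' (exp y - 1) k] at h
    refine h.congr_fun fun m => ?_
    rw [stirlingSecond_succ_succ]
    push_cast [factorial_succ]
    ring

theorem hasSum_stirlingSecond_exp_mul_exp_sub_one_pow (k : ℕ) (y : 𝕂) :
    HasSum (fun m => (k ! * stirlingSecond (m + 1) (k + 1) : 𝕂) * y ^ m / m !)
      (exp y * (exp y - 1) ^ k) :=
  hasSum_exp_mul_of_hasSum_stirlingSecond (hasSum_stirlingSecond_exp_sub_one_pow k y)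

theorem norm_exp_sub_one_le (y : 𝕂) : ‖exp y - 1‖ ≤ Real.exp ‖y‖ - 1 := by
  have h := hasSum_stirlingSecond_exp_sub_one_pow 1 ‖y‖
  rw [← Real.exp_eq_exp_ℝ, pow_one] at h
  simpa using (hasSum_stirlingSecond_exp_sub_one_pow 1 y).norm_le_of_bounded h
    fun m => (norm_stirlingSecond_mul_pow_div_factorial 1 m y).le

theorem summable_norm_stirlingSecond_double {y w : 𝕂} (h : Real.exp ‖y‖ - 1 < ‖w‖) :
    Summable fun p : ℕ × ℕ => ‖(p.1 ! * stirlingSecond (p.2 + 1) (p.1 + 1) : 𝕂) * y ^ p.2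
      / (p.2 ! : 𝕂) / w ^ (p.1 + 1)‖ := by
  have hrows (k : ℕ) : HasSum
      (fun m => ‖(k ! * stirlingSecond (m + 1) (k + 1) : 𝕂) * y ^ m / (m ! : 𝕂) / w ^ (k + 1)‖)
      (Real.exp ‖y‖ * ((Real.exp ‖y‖ - 1) ^ k / ‖w‖ ^ (k + 1))) := by
    rw [← mul_div_assoc]
    have := (hasSum_stirlingSecond_exp_mul_exp_sub_one_pow k ‖y‖).div_const (‖w‖ ^ (k + 1))
    rw [← Real.exp_eq_exp_ℝ] at this
    refine this.congr_fun fun m => ?_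
    simp only [norm_div, norm_mul, norm_pow, RCLike.norm_natCast]
  refine (summable_prod_of_nonneg fun _ => norm_nonneg _).mpr
    ⟨fun k => (hrows k).summable, ?_⟩
  have hratio : ‖Real.exp ‖y‖ - 1‖ < ‖‖w‖‖ := by
    rwa [Real.norm_of_nonneg (sub_nonneg.mpr (Real.one_le_exp (norm_nonneg y))), norm_norm]
  exact ((hasSum_pow_div_pow_succ hratio).mul_left (Real.exp ‖y‖)).summable.congr
    fun k => ((hrows k).tsum_eq).symm

theorem hasSum_exp_div_sub_exp_sub_one {y w : 𝕂} (h : Real.exp ‖y‖ - 1 < ‖w‖) :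
    HasSum (fun m => (∑ k ∈ range (m + 1), (k ! * stirlingSecond (m + 1) (k + 1) : 𝕂)
        / w ^ (k + 1)) * y ^ m / (m ! : 𝕂)) (exp y / (w - (exp y - 1))) := by
  set T : ℕ × ℕ → 𝕂 := fun p =>
    (p.1 ! * stirlingSecond (p.2 + 1) (p.1 + 1) : 𝕂) * y ^ p.2 / (p.2 ! : 𝕂) / w ^ (p.1 + 1)
  have hrows (k : ℕ) : HasSum (fun m => T (k, m)) (exp y * ((exp y - 1) ^ k / w ^ (k + 1))) := by
    rw [← mul_div_assoc]
    exact (hasSum_stirlingSecond_exp_mul_exp_sub_one_pow k y).div_const _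
  have hgeom := (hasSum_pow_div_pow_succ ((norm_exp_sub_one_le y).trans_lt h)).mul_left (exp y)
  have hT : HasSum T (exp y / (w - (exp y - 1))) := by
    have hsum := (summable_norm_stirlingSecond_double h).of_norm.hasSum
    rwa [(hsum.prod_fiberwise hrows).unique hgeom, ← div_eq_mul_inv] at hsum
  have hcols (m : ℕ) : HasSum (fun k => T (k, m)) ((∑ k ∈ range (m + 1),
      (k ! * stirlingSecond (m + 1) (k + 1) : 𝕂) / w ^ (k + 1)) * y ^ m / (m ! : 𝕂)) := by
    rw [sum_mul, sum_div]
    refine (hasSum_sum_of_ne_finset_zero fun k hk => ?_).congr_fun fun k => ?_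
    · rw [stirlingSecond_eq_zero_of_lt (by simpa using hk)]
      simp
    · simp only [T]
      ring
  exact ((Equiv.prodComm ℕ ℕ).hasSum_iff.mpr hT).prod_fiberwise hcols

end Series

noncomputable def apostolBernoulliClosedForm (z : ℂ) (n : ℕ) : ℂ :=
  (-1 : ℂ) ^ (n - 1) * (n : ℂ) * ∑ k ∈ Finset.Icc 1 n,
    (((k - 1).factorial : ℂ) / (z - 1) ^ k) * (stirling n k : ℂ)

theorem apostolBernoulliClosedForm_zero (z : ℂ) : apostolBernoulliClosedForm z 0 = 0 := by
  simp [apostolBernoulliClosedForm]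

theorem apostolBernoulliClosedForm_succ (z : ℂ) (m : ℕ) :
    apostolBernoulliClosedForm z (m + 1) = (-1) ^ m * (m + 1) *
      ∑ k ∈ range (m + 1), (k ! * stirlingSecond (m + 1) (k + 1) : ℂ) / (z - 1) ^ (k + 1) := by
  rw [apostolBernoulliClosedForm, stirling_eq_stirlingSecond, ← Ico_add_one_right_eq_Icc,
    sum_Ico_eq_sum_range]
  simp only [Nat.add_sub_cancel, add_comm 1]
  push_cast
  exact congrArg _ (sum_congr rfl fun k _ => by ring)

theorem eventually_hasSum_apostolBernoulliClosedForm {z : ℂ} (hz : z ≠ 1) :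
    ∀ᶠ x in 𝓝 (0 : ℂ), HasSum (fun n => apostolBernoulliClosedForm z n / (n ! : ℂ) * x ^ n)
      (x / (z * Complex.exp x - 1)) := by
  have hnear : ∀ᶠ x in 𝓝 (0 : ℂ), Real.exp ‖x‖ - 1 < ‖z - 1‖ :=
    (by fun_prop : Continuous fun x : ℂ => Real.exp ‖x‖ - 1).continuousAt.eventually_lt
      continuousAt_const (by simpa using sub_ne_zero.mpr hz)
  filter_upwards [hnear] with x hx
  have h := (hasSum_exp_div_sub_exp_sub_one (y := -x) (w := z - 1) (by rwa [norm_neg])).mul_left x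
  have hsum : x * (Complex.exp (-x) / (z - 1 - (Complex.exp (-x) - 1)))
      = x / (z * Complex.exp x - 1) := by
    have he := Complex.exp_ne_zero x
    have hden : z - 1 - ((Complex.exp x)⁻¹ - 1) = (z * Complex.exp x - 1) / Complex.exp x := by
      field_simp
      ring
    rw [Complex.exp_neg, hden, div_div_eq_mul_div, inv_mul_cancel₀ he, mul_one_div]
  rw [← Complex.exp_eq_exp_ℂ, hsum] at h
  refine (hasSum_nat_add_iff' 1).mp ?_
  simp only [sum_range_one, apostolBernoulliClosedForm_zero, zero_div, zero_mul, sub_zero]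
  refine h.congr_fun fun m => ?_
  rw [apostolBernoulliClosedForm_succ, neg_pow, factorial_succ]
  push_cast
  field_simp
  ring

theorem apostolBernoulli_number_closed_form_XuChen_general (z : ℂ) (hz : z ≠ 1) (B : ℕ → ℂ → ℂ)
    (hB : ∀ u : ℂ, ∀ᶠ x : ℂ in nhds 0,
      HasSum (fun m : ℕ => B m u * x ^ m / (m.factorial : ℂ))
        (x * Complex.exp (u * x) / (z * Complex.exp x - 1)))
    (n : ℕ) :
    B n 0 = (-1 : ℂ) ^ (n - 1) * (n : ℂ) * ∑ k ∈ Finset.Icc 1 n,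
      (((k - 1).factorial : ℂ) / (z - 1) ^ k) * (stirling n k : ℂ) := by
  have hB0 : ∀ᶠ x in 𝓝 (0 : ℂ), HasSum (fun m => B m 0 / (m ! : ℂ) * x ^ m)
      (x / (z * Complex.exp x - 1)) :=
    (hB 0).mono fun x hx => by simpa [div_mul_eq_mul_div] using hx
  have hcoeff := congrFun
    (eq_of_eventually_hasSum_mul_pow hB0 (eventually_hasSum_apostolBernoulliClosedForm hz)) n
  exact (div_left_inj' (Nat.cast_ne_zero.mpr (factorial_ne_zero n))).mp hcoeff

theorem apostolBernoulli_number_closed_form_XuChen (z : ℂ) (hz : z ≠ 1) (B : ℕ → ℂ → ℂ)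
    (hB : ∀ u : ℂ, ∀ᶠ x : ℂ in nhds 0,
      HasSum (fun m : ℕ => B m u * x ^ m / (m.factorial : ℂ))
        (x * Complex.exp (u * x) / (z * Complex.exp x - 1)))
    (n : ℕ) (hn : 1 ≤ n) :
    B n 0 = (-1 : ℂ) ^ (n - 1) * (n : ℂ) * ∑ k ∈ Finset.Icc 1 n,
      (((k - 1).factorial : ℂ) / (z - 1) ^ k) * (stirling n k : ℂ) :=
  apostolBernoulli_number_closed_form_XuChen_general z hz B hB n
end

section
/- Let z be a complex number with z ≠ 1. For every integer n ≥ 1, under the conventions C(0,0)=1 and C(p,q)=0 for q > p ≥ 0, the Apostol–Bernoulli polynomial satisfies B_{n+1}(u,z) = ((-1)^n (n+1)/(z−1)^{n+1}) times the determinant of the n×n matrix with (ℓ,m)-entry C(ℓ,m)[z(1−u)^{ℓ−m} − (−u)^{ℓ−m}] for 1 ≤ ℓ ≤ n and 0 ≤ m ≤ n−1. -/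
/-!
The Taylor coefficients of `e^{-ux} (z e^x - 1)` are `a_k / k!` with
`a_k = z (1 - u)^k - (-u)^k`, and multiplying the Apostol–Bernoulli generating function by it
gives `x`. Comparing coefficients yields `∑_i C(N,i) B_i a_{N-i} = [N = 1]`. Since `B_0 = 0`,
dividing the equation for `N + 1` by `N + 1` shows that `w_i = B_{i+1} / (i+1)` solves the
lower triangular system `∑_i C(N,i) w_i a_{N-i} = [N = 0]` (`0 ≤ N ≤ n`), whose determinant is
`a_0^{n+1} = (z - 1)^{n+1}`. Cramer's rule for `w_n` gives the minor obtained by deleting the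
first row and the last column, which is the matrix of the statement.
-/

open Finset Topology
open scoped Nat Matrix

section PowerSeries

variable {𝕜 : Type*} [NontriviallyNormedField 𝕜]

theorem hasFPowerSeriesAt_ofScalars_of_eventually_hasSum {c : ℕ → 𝕜} {f : 𝕜 → 𝕜}
    (h : ∀ᶠ x in 𝓝 0, HasSum (fun n => c n * x ^ n) (f x)) :
    HasFPowerSeriesAt f (FormalMultilinearSeries.ofScalars 𝕜 c) 0 := by
  obtain ⟨r, hr, hball⟩ := Metric.eventually_nhds_iff.mp h
  obtain ⟨x₀, hx₀, hx₀r⟩ := NormedField.exists_norm_lt 𝕜 hr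
  refine ⟨‖x₀‖₊, ?_, by simpa using hx₀, fun {y} hy => ?_⟩
  · apply FormalMultilinearSeries.le_radius_of_tendsto (l := 0)
    simpa [FormalMultilinearSeries.ofScalars_norm, norm_mul, norm_pow] using
      (hball (by simpa using hx₀r)).summable.tendsto_atTop_zero.norm
  · rw [Metric.eball_coe, Metric.mem_ball] at hy
    simpa [FormalMultilinearSeries.ofScalars_apply_eq', mul_comm] using
      hball (hy.trans (by simpa using hx₀r))

theorem eq_of_eventually_hasSum_pow {c d : ℕ → 𝕜} {f : 𝕜 → 𝕜}
    (hc : ∀ᶠ x in 𝓝 0, HasSum (fun n => c n * x ^ n) (f x))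
    (hd : ∀ᶠ x in 𝓝 0, HasSum (fun n => d n * x ^ n) (f x)) : c = d :=
  (FormalMultilinearSeries.ofScalars_series_eq_iff (E := 𝕜) c d).mp <|
    (hasFPowerSeriesAt_ofScalars_of_eventually_hasSum hc).eq_formalMultilinearSeries
      (hasFPowerSeriesAt_ofScalars_of_eventually_hasSum hd)

end PowerSeries

theorem hasSum_binomial_convolution {𝕜 : Type*} [RCLike 𝕜] {b a : ℕ → 𝕜} {x F G : 𝕜}
    (hb : HasSum (fun n => b n * x ^ n / n !) F) (ha : HasSum (fun n => a n * x ^ n / n !) G) :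
    HasSum (fun n => (∑ i ∈ range (n + 1), n.choose i * b i * a (n - i)) * x ^ n / n !)
      (F * G) := by
  have hb' : Summable fun n => ‖b n * x ^ n / (n ! : 𝕜)‖ := summable_norm_iff.mpr hb.summable
  have ha' : Summable fun n => ‖a n * x ^ n / (n ! : 𝕜)‖ := summable_norm_iff.mpr ha.summable
  have hprod := hasSum_sum_range_mul_of_summable_norm hb' ha'
  rw [hb.tsum_eq, ha.tsum_eq] at hprod
  convert hprod using 1
  funext n
  rw [sum_mul, sum_div]
  refine sum_congr rfl fun i hi => ?_
  have hin : i ≤ n := Nat.lt_succ_iff.mp (mem_range.mp hi)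
  have hn : (n ! : 𝕜) ≠ 0 := Nat.cast_ne_zero.mpr n.factorial_ne_zero
  rw [Nat.cast_choose 𝕜 hin, ← pow_mul_pow_sub x hin]
  field_simp

theorem sum_choose_mul_div_succ {K : Type*} [Field K] [CharZero K] (b a : ℕ → K) (N : ℕ) :
    ∑ i ∈ range (N + 1), (N.choose i : K) * (b (i + 1) / (i + 1)) * a (N - i) =
      (∑ i ∈ range (N + 2), ((N + 1).choose i : K) * b i * a (N + 1 - i) - b 0 * a (N + 1)) /
        (N + 1) := by
  rw [sum_range_succ' (fun i => ((N + 1).choose i : K) * b i * a (N + 1 - i)),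
    Nat.choose_zero_right, Nat.cast_one, one_mul, Nat.sub_zero, add_sub_cancel_right, sum_div]
  refine sum_congr rfl fun i _ => ?_
  have hchoose : ((N + 1 : ℕ) * N.choose i : K) = (N + 1).choose (i + 1) * (i + 1 : ℕ) := by
    exact_mod_cast Nat.add_one_mul_choose_eq N i
  have hN : (N + 1 : K) ≠ 0 := Nat.cast_add_one_ne_zero N
  have hi : (i + 1 : K) ≠ 0 := Nat.cast_add_one_ne_zero i
  rw [Nat.add_sub_add_right]
  field_simp
  push_cast at hchoose
  linear_combination b (i + 1) * a (N - i) * hchoose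

def binomialToeplitz {R : Type*} [Semiring R] (m : ℕ) (a : ℕ → R) :
    Matrix (Fin m) (Fin m) R :=
  Matrix.of fun i j => ((i : ℕ).choose j : R) * a (i - j)

section BinomialToeplitz

variable {R : Type*}

theorem det_binomialToeplitz [CommRing R] (m : ℕ) (a : ℕ → R) :
    (binomialToeplitz m a).det = a 0 ^ m := by
  rw [Matrix.det_of_isLowerTriangular _ fun i j hij => ?_]
  · simp [binomialToeplitz]
  · simp [binomialToeplitz, Nat.choose_eq_zero_of_lt (show (i : ℕ) < j from hij)]

theorem binomialToeplitz_mulVec_apply [CommSemiring R] {m : ℕ} (a c : ℕ → R) (N : Fin m) :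
    (binomialToeplitz m a *ᵥ fun i => c i) N =
      ∑ i ∈ range (N + 1), ((N : ℕ).choose i : R) * c i * a (N - i) := by
  simp only [Matrix.mulVec, dotProduct, binomialToeplitz, Matrix.of_apply]
  rw [Fin.sum_univ_eq_sum_range (fun i => ((N : ℕ).choose i : R) * a (N - i) * c i) m]
  refine (sum_subset (range_subset_range.mpr N.isLt) fun i _ hi => ?_).symm.trans ?_
  · simp [Nat.choose_eq_zero_of_lt (not_lt.mp (mem_range.not.mp hi))]
  · exact sum_congr rfl fun i _ => by ring

theorem binomialToeplitz_submatrix_succ_castSucc [Semiring R] (n : ℕ) (a : ℕ → R) :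
    (binomialToeplitz (n + 1) a).submatrix Fin.succ Fin.castSucc =
      Matrix.of fun i j : Fin n => (((i : ℕ) + 1).choose j : R) * a ((i : ℕ) + 1 - j) :=
  rfl

end BinomialToeplitz

theorem Matrix.det_mul_last_eq_of_mulVec_eq_single {R : Type*} [CommRing R] {n : ℕ}
    (T : Matrix (Fin (n + 1)) (Fin (n + 1)) R) {v : Fin (n + 1) → R}
    (hv : T *ᵥ v = Pi.single 0 1) :
    T.det * v (Fin.last n) = (-1) ^ n * (T.submatrix Fin.succ Fin.castSucc).det := by
  have hadj : T.det • v = T.adjugate *ᵥ Pi.single 0 1 := by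
    rw [← hv, Matrix.mulVec_mulVec, Matrix.adjugate_mul, Matrix.smul_mulVec, Matrix.one_mulVec]
  have h := congrFun hadj (Fin.last n)
  rw [Matrix.mulVec_single_one] at h
  simpa [Matrix.adjugate_fin_succ_eq_det_submatrix] using h

def apostolCoeff (z u : ℂ) (k : ℕ) : ℂ :=
  z * (1 - u) ^ k - (-u) ^ k

theorem hasSum_apostolCoeff (z u x : ℂ) :
    HasSum (fun k => apostolCoeff z u k * x ^ k / k !)
      (Complex.exp (-(u * x)) * (z * Complex.exp x - 1)) := by
  have h₁ := NormedSpace.expSeries_div_hasSum_exp ((1 - u) * x)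
  have h₂ := NormedSpace.expSeries_div_hasSum_exp (-u * x)
  rw [← Complex.exp_eq_exp_ℂ] at h₁ h₂
  have hval : Complex.exp (-(u * x)) * (z * Complex.exp x - 1) =
      z * Complex.exp ((1 - u) * x) - Complex.exp (-u * x) := by
    rw [show (1 - u) * x = x + -(u * x) by ring, Complex.exp_add, neg_mul]
    ring
  have hterm : (fun k => apostolCoeff z u k * x ^ k / k !) =
      fun k => z * (((1 - u) * x) ^ k / k !) - (-u * x) ^ k / k ! := by
    funext k
    simp only [apostolCoeff, mul_pow]
    ring
  rw [hval, hterm]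
  exact (h₁.mul_left z).sub h₂

def HasApostolBernoulliEGF (z u : ℂ) (b : ℕ → ℂ) : Prop :=
  ∀ᶠ x in 𝓝 0, HasSum (fun m => b m * x ^ m / m !)
    (x * Complex.exp (u * x) / (z * Complex.exp x - 1))

section Apostol

variable {z u : ℂ} {b : ℕ → ℂ}

theorem apostolBernoulli_zero (hb : HasApostolBernoulliEGF z u b) : b 0 = 0 := by
  unfold HasApostolBernoulliEGF at hb
  have hsingle := hasSum_single (f := fun m => b m * (0 : ℂ) ^ m / m !) 0
    fun m hm => by simp [hm]
  simpa using hsingle.unique hb.self_of_nhds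

theorem HasApostolBernoulliEGF.eventually_hasSum_convolution (hz : z ≠ 1)
    (hb : HasApostolBernoulliEGF z u b) :
    ∀ᶠ x in 𝓝 0, HasSum (fun N => (∑ i ∈ range (N + 1),
      N.choose i * b i * apostolCoeff z u (N - i)) / N ! * x ^ N) x := by
  have hden : ∀ᶠ x : ℂ in 𝓝 0, z * Complex.exp x - 1 ≠ 0 :=
    (by fun_prop : Continuous fun x : ℂ => z * Complex.exp x - 1).continuousAt.eventually_ne
      (by simpa [sub_eq_zero] using hz)
  filter_upwards [hb, hden] with x hx hD
  have hprod := hasSum_binomial_convolution hx (hasSum_apostolCoeff z u x)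
  have hval : x * Complex.exp (u * x) / (z * Complex.exp x - 1) *
      (Complex.exp (-(u * x)) * (z * Complex.exp x - 1)) = x := by
    rw [mul_comm (Complex.exp _), ← mul_assoc, div_mul_cancel₀ _ hD, mul_assoc,
      ← Complex.exp_add, add_neg_cancel, Complex.exp_zero, mul_one]
  rw [hval] at hprod
  simpa only [div_mul_eq_mul_div] using hprod

theorem apostolBernoulli_recurrence (hz : z ≠ 1) (hb : HasApostolBernoulliEGF z u b) (N : ℕ) :
    ∑ i ∈ range (N + 1), N.choose i * b i * apostolCoeff z u (N - i) =
      if N = 1 then 1 else 0 := by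
  have hid (x : ℂ) : HasSum (fun N => (if N = 1 then (1 : ℂ) else 0) * x ^ N) x := by
    have hterm : (fun N => (if N = 1 then (1 : ℂ) else 0) * x ^ N) =
        fun N => if N = 1 then x else 0 := by
      funext N
      split_ifs <;> simp_all
    exact hterm ▸ hasSum_ite_eq 1 x
  have hcoeff := congrFun (eq_of_eventually_hasSum_pow (f := id)
    (hb.eventually_hasSum_convolution hz) (.of_forall hid)) N
  rw [div_eq_iff (Nat.cast_ne_zero.mpr N.factorial_ne_zero)] at hcoeff
  rw [hcoeff]
  split_ifs with h1 <;> simp [h1]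

theorem apostolBernoulli_shifted_recurrence (hz : z ≠ 1) (hb : HasApostolBernoulliEGF z u b)
    (N : ℕ) :
    ∑ i ∈ range (N + 1), N.choose i * (b (i + 1) / (i + 1)) * apostolCoeff z u (N - i) =
      if N = 0 then 1 else 0 := by
  rw [sum_choose_mul_div_succ, apostolBernoulli_recurrence hz hb, apostolBernoulli_zero hb,
    zero_mul, sub_zero]
  by_cases hN : N = 0 <;> simp [hN]

end Apostol

theorem apostolBernoulli_det_form_general (z : ℂ) (hz : z ≠ 1) (B : ℕ → ℂ → ℂ)
    (hB : ∀ u : ℂ, ∀ᶠ x : ℂ in nhds 0,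
      HasSum (fun m : ℕ => B m u * x ^ m / (m.factorial : ℂ))
        (x * Complex.exp (u * x) / (z * Complex.exp x - 1)))
    (n : ℕ) (u : ℂ) :
    B (n + 1) u = ((-1 : ℂ) ^ n * ((n : ℂ) + 1) / (z - 1) ^ (n + 1)) *
      Matrix.det (Matrix.of fun i j : Fin n =>
        (((i : ℕ) + 1).choose (j : ℕ) : ℂ) *
          (z * (1 - u) ^ ((i : ℕ) + 1 - (j : ℕ)) - (-u) ^ ((i : ℕ) + 1 - (j : ℕ)))) := by
  set T := binomialToeplitz (n + 1) (apostolCoeff z u)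
  have hsolve : T *ᵥ (fun i => B (i + 1) u / (i + 1)) = Pi.single 0 1 := by
    ext N
    rw [binomialToeplitz_mulVec_apply _ (fun i => B (i + 1) u / (i + 1)),
      apostolBernoulli_shifted_recurrence hz (hB u), Pi.single_apply]
    exact if_congr Fin.val_eq_zero_iff rfl rfl
  have hcramer := T.det_mul_last_eq_of_mulVec_eq_single hsolve
  rw [det_binomialToeplitz, binomialToeplitz_submatrix_succ_castSucc, Fin.val_last] at hcramer
  simp only [apostolCoeff, pow_zero, mul_one] at hcramer
  have hpow : (z - 1) ^ (n + 1) ≠ 0 := pow_ne_zero _ (sub_ne_zero.mpr hz)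
  rw [div_mul_eq_mul_div, mul_right_comm, ← hcramer]
  field_simp

theorem apostolBernoulli_det_form (z : ℂ) (hz : z ≠ 1) (B : ℕ → ℂ → ℂ)
    (hB : ∀ u : ℂ, ∀ᶠ x : ℂ in nhds 0,
      HasSum (fun m : ℕ => B m u * x ^ m / (m.factorial : ℂ))
        (x * Complex.exp (u * x) / (z * Complex.exp x - 1)))
    (n : ℕ) (hn : 1 ≤ n) (u : ℂ) :
    B (n + 1) u = ((-1 : ℂ) ^ n * ((n : ℂ) + 1) / (z - 1) ^ (n + 1)) *
      Matrix.det (Matrix.of fun i j : Fin n =>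
        (((i : ℕ) + 1).choose (j : ℕ) : ℂ) *
          (z * (1 - u) ^ ((i : ℕ) + 1 - (j : ℕ)) - (-u) ^ ((i : ℕ) + 1 - (j : ℕ)))) :=
  apostolBernoulli_det_form_general z hz B hB n u
end
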